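/- arXiv:2408.08268 — 2 statements merged into one kernel-verified Lean document; each statement's English description precedes it below -/
import Mathlib

section
/- Let u : H^2 → R be smooth, p0 ∈ H^2, η0 = Π(p0) the image under radial projection Π(x0,x1,x2) = (x1/x0, x2/x0), and define ū : D^2 → R by u(Π^{-1}(η)) = ū(η)/√(1-|η|²). Let a(η) = ū(η0) + dū_{η0}(η - η0) be the affine tangent function of ū at η0. Then with σ = grad^{H^2}_{p0} u - u(p0) p0 ∈ R^{1,2}, one has a(η) = ⟨(1,η), σ⟩_{1,2} for all η ∈ D^2. -/
/-- The Minkowski bilinear form of signature (-,+,+) on ℝ^{1,2}. -/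
def mink (x y : Fin 3 → ℝ) : ℝ := -(x 0 * y 0) + x 1 * y 1 + x 2 * y 2

/-- The point (1, η) of the affine chart, for η in the Klein disk. -/
def emb (η : ℝ × ℝ) : Fin 3 → ℝ := ![1, η.1, η.2]

/-- Inverse of the radial projection Π(x₀,x₁,x₂) = (x₁/x₀, x₂/x₀) : the point of the
hyperboloid H² over η ∈ D². -/
noncomputable def invProj (η : ℝ × ℝ) : Fin 3 → ℝ :=
  (Real.sqrt (1 - (η.1 ^ 2 + η.2 ^ 2)))⁻¹ • emb η

lemma mink_invProj_self (η : ℝ × ℝ) (h : η.1 ^ 2 + η.2 ^ 2 < 1) :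
    mink (invProj η) (invProj η) = -1 := by
  have h0 : (0:ℝ) < 1 - (η.1 ^ 2 + η.2 ^ 2) := by linarith
  have hr2 : Real.sqrt (1 - (η.1 ^ 2 + η.2 ^ 2)) * Real.sqrt (1 - (η.1 ^ 2 + η.2 ^ 2))
      = 1 - (η.1 ^ 2 + η.2 ^ 2) := Real.mul_self_sqrt h0.le
  have hne : Real.sqrt (1 - (η.1 ^ 2 + η.2 ^ 2)) ≠ 0 := by positivity
  show -(((Real.sqrt (1 - (η.1 ^ 2 + η.2 ^ 2)))⁻¹ * 1) * ((Real.sqrt (1 - (η.1 ^ 2 + η.2 ^ 2)))⁻¹ * 1))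
    + ((Real.sqrt (1 - (η.1 ^ 2 + η.2 ^ 2)))⁻¹ * η.1) * ((Real.sqrt (1 - (η.1 ^ 2 + η.2 ^ 2)))⁻¹ * η.1)
    + ((Real.sqrt (1 - (η.1 ^ 2 + η.2 ^ 2)))⁻¹ * η.2) * ((Real.sqrt (1 - (η.1 ^ 2 + η.2 ^ 2)))⁻¹ * η.2) = -1
  field_simp
  linarith [hr2]

set_option maxHeartbeats 1000000 in
/-- Let u : H² → ℝ be smooth, p₀ ∈ H², η₀ = Π(p₀), and let ū : D² → ℝ be defined by
u(Π⁻¹(η)) = ū(η)/√(1-|η|²).  Let a(η) = ū(η₀) + dū_{η₀}(η - η₀) be the affine tangent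
function of ū at η₀.  Then with σ = grad^{H²}_{p₀} u - u(p₀)·p₀, one has
a(η) = ⟨(1,η), σ⟩_{1,2} for all η ∈ D².

Here the hyperbolic gradient G = grad^{H²}_{p₀} u is characterized as the tangent vector
at p₀ such that for every curve c in H² through p₀, (u ∘ c)'(0) = ⟨G, c'(0)⟩₁,₂. -/
theorem stmt3 (u : (Fin 3 → ℝ) → ℝ) (η₀ : ℝ × ℝ) (hη₀ : η₀.1 ^ 2 + η₀.2 ^ 2 < 1)
    (p₀ : Fin 3 → ℝ) (hp₀ : p₀ = invProj η₀)
    (ub : ℝ × ℝ → ℝ) (hub : ∀ η : ℝ × ℝ, η.1 ^ 2 + η.2 ^ 2 < 1 →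
      u (invProj η) = ub η / Real.sqrt (1 - (η.1 ^ 2 + η.2 ^ 2)))
    (G : Fin 3 → ℝ) (hGtan : mink p₀ G = 0)
    (hG : ∀ (c : ℝ → Fin 3 → ℝ) (c' : Fin 3 → ℝ),
      (∀ t, mink (c t) (c t) = -1 ∧ 0 < c t 0) → c 0 = p₀ → HasDerivAt c c' 0 →
      HasDerivAt (fun t => u (c t)) (mink G c') 0)
    (Dub : (ℝ × ℝ) →L[ℝ] ℝ) (hDub : HasFDerivAt ub Dub η₀)
    (σ : Fin 3 → ℝ) (hσ : σ = G - u p₀ • p₀) :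
    ∀ η : ℝ × ℝ, η.1 ^ 2 + η.2 ^ 2 < 1 →
      ub η₀ + Dub (η - η₀) = mink (emb η) σ := by
  have h0 : (0:ℝ) < 1 - (η₀.1 ^ 2 + η₀.2 ^ 2) := by linarith
  set r₀ : ℝ := Real.sqrt (1 - (η₀.1 ^ 2 + η₀.2 ^ 2)) with hr₀def
  have hr₀pos : 0 < r₀ := Real.sqrt_pos.mpr h0
  have hr₀ne : r₀ ≠ 0 := ne_of_gt hr₀pos
  have hr₀sq : r₀ * r₀ = 1 - (η₀.1 ^ 2 + η₀.2 ^ 2) := Real.mul_self_sqrt h0.le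
  have hp0 : p₀ 0 = r₀⁻¹ * 1 := by rw [hp₀]; rfl
  have hp1 : p₀ 1 = r₀⁻¹ * η₀.1 := by rw [hp₀]; rfl
  have hp2 : p₀ 2 = r₀⁻¹ * η₀.2 := by rw [hp₀]; rfl
  have hub0 : ub η₀ = r₀ * u p₀ := by
    have h := hub η₀ hη₀
    rw [← hp₀, ← hr₀def] at h
    rw [h]; field_simp
  have hσi : ∀ i, σ i = G i - u p₀ * p₀ i := by
    intro i; rw [hσ]; simp
  have hG0 : -(G 0) + η₀.1 * G 1 + η₀.2 * G 2 = 0 := by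
    have h := hGtan
    rw [mink, hp0, hp1, hp2] at h
    have h2 : r₀⁻¹ * (-(G 0) + η₀.1 * G 1 + η₀.2 * G 2) = 0 := by linarith [h]
    rcases mul_eq_zero.mp h2 with h3 | h3
    · exact absurd h3 (inv_ne_zero hr₀ne)
    · exact h3
  -- The key directional-derivative identity
  have key : ∀ v : ℝ × ℝ, Dub v = v.1 * σ 1 + v.2 * σ 2 := by
    intro v
    set s : ℝ := η₀.1 * v.1 + η₀.2 * v.2 with hsdef
    set K : ℝ := 2 * |s| + (v.1 ^ 2 + v.2 ^ 2) with hKdef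
    have hK : 0 ≤ K := by positivity
    set ε : ℝ := min 1 ((1 - (η₀.1 ^ 2 + η₀.2 ^ 2)) / (2 * (K + 1))) with hεdef
    have hεpos : 0 < ε := lt_min one_pos (by positivity)
    have hε1 : ε ≤ 1 := min_le_left _ _
    have hε2 : ε * (K + 1) ≤ (1 - (η₀.1 ^ 2 + η₀.2 ^ 2)) / 2 := by
      have h1 : ε ≤ (1 - (η₀.1 ^ 2 + η₀.2 ^ 2)) / (2 * (K + 1)) := min_le_right _ _
      have h2 : (0:ℝ) < K + 1 := by linarith
      calc ε * (K + 1) ≤ ((1 - (η₀.1 ^ 2 + η₀.2 ^ 2)) / (2 * (K + 1))) * (K + 1) :=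
            mul_le_mul_of_nonneg_right h1 h2.le
        _ = (1 - (η₀.1 ^ 2 + η₀.2 ^ 2)) / 2 := by field_simp
    have hφabs : ∀ t : ℝ, |ε * Real.sin (t / ε)| ≤ ε := by
      intro t
      rw [abs_mul, abs_of_pos hεpos]
      have h1 : |Real.sin (t / ε)| ≤ 1 := abs_le.mpr ⟨Real.neg_one_le_sin _, Real.sin_le_one _⟩
      calc ε * |Real.sin (t / ε)| ≤ ε * 1 := mul_le_mul_of_nonneg_left h1 hεpos.le
        _ = ε := mul_one ε
    have hdisk : ∀ t : ℝ, (η₀.1 + ε * Real.sin (t / ε) * v.1) ^ 2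
        + (η₀.2 + ε * Real.sin (t / ε) * v.2) ^ 2 < 1 := by
      intro t
      have h1 := hφabs t
      have h2 : (ε * Real.sin (t / ε)) * s ≤ ε * |s| :=
        le_trans (le_abs_self _) (by
          rw [abs_mul]
          exact mul_le_mul_of_nonneg_right h1 (abs_nonneg s))
      have h3 : (ε * Real.sin (t / ε)) ^ 2 ≤ ε := by
        nlinarith [abs_nonneg (ε * Real.sin (t / ε)), sq_abs (ε * Real.sin (t / ε))]
      have h4 : (ε * Real.sin (t / ε)) ^ 2 * (v.1 ^ 2 + v.2 ^ 2) ≤ ε * (v.1 ^ 2 + v.2 ^ 2) :=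
        mul_le_mul_of_nonneg_right h3 (by positivity)
      have h5 : ε * K = 2 * (ε * |s|) + ε * (v.1 ^ 2 + v.2 ^ 2) := by rw [hKdef]; ring
      have h6 : (η₀.1 + ε * Real.sin (t / ε) * v.1) ^ 2 + (η₀.2 + ε * Real.sin (t / ε) * v.2) ^ 2
          = η₀.1 ^ 2 + η₀.2 ^ 2 + 2 * ((ε * Real.sin (t / ε)) * s)
            + (ε * Real.sin (t / ε)) ^ 2 * (v.1 ^ 2 + v.2 ^ 2) := by rw [hsdef]; ring
      rw [h6]
      linarith [h2, h4, hε2, h5, hεpos]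
    have hφd : HasDerivAt (fun t : ℝ => ε * Real.sin (t / ε)) 1 0 := by
      have h1 : HasDerivAt (fun t : ℝ => t / ε) (1 / ε) 0 := (hasDerivAt_id 0).div_const ε
      have h2 := (Real.hasDerivAt_sin ((0:ℝ) / ε)).comp 0 h1
      have h3 := h2.const_mul ε
      refine h3.congr_deriv ?_
      rw [zero_div, Real.cos_zero]
      field_simp
    have had : HasDerivAt (fun t : ℝ => η₀.1 + ε * Real.sin (t / ε) * v.1) v.1 0 := by
      simpa using (hφd.mul_const v.1).const_add η₀.1
    have hbd : HasDerivAt (fun t : ℝ => η₀.2 + ε * Real.sin (t / ε) * v.2) v.2 0 := by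
      simpa using (hφd.mul_const v.2).const_add η₀.2
    have hq : HasDerivAt (fun t : ℝ => 1 - ((η₀.1 + ε * Real.sin (t / ε) * v.1) ^ 2
        + (η₀.2 + ε * Real.sin (t / ε) * v.2) ^ 2)) (-(2 * s)) 0 := by
      have h := ((had.pow 2).add (hbd.pow 2)).const_sub 1
      refine h.congr_deriv ?_
      rw [hsdef]
      simp [zero_div]
      ring
    have hq0 : 1 - ((η₀.1 + ε * Real.sin ((0:ℝ) / ε) * v.1) ^ 2
        + (η₀.2 + ε * Real.sin ((0:ℝ) / ε) * v.2) ^ 2) = 1 - (η₀.1 ^ 2 + η₀.2 ^ 2) := by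
      simp [zero_div]
    have hc0 : Real.sqrt (1 - ((η₀.1 + ε * Real.sin ((0:ℝ) / ε) * v.1) ^ 2
        + (η₀.2 + ε * Real.sin ((0:ℝ) / ε) * v.2) ^ 2)) = r₀ := by
      rw [hq0, hr₀def]
    have hrd : HasDerivAt (fun t : ℝ => Real.sqrt (1 - ((η₀.1 + ε * Real.sin (t / ε) * v.1) ^ 2
        + (η₀.2 + ε * Real.sin (t / ε) * v.2) ^ 2))) (-(2 * s) / (2 * r₀)) 0 := by
      have h := hq.sqrt (by rw [hq0]; exact ne_of_gt h0)
      convert h using 2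
      rw [hc0]
    have hrinvd : HasDerivAt (fun t : ℝ => (Real.sqrt (1 - ((η₀.1 + ε * Real.sin (t / ε) * v.1) ^ 2
        + (η₀.2 + ε * Real.sin (t / ε) * v.2) ^ 2)))⁻¹) (s / (r₀ * r₀ * r₀)) 0 := by
      have h := hrd.inv (by rw [hc0]; exact hr₀ne)
      refine h.congr_deriv ?_
      rw [hc0]
      field_simp
    -- the curve on the hyperboloid
    have hcd : HasDerivAt (fun t : ℝ => invProj (η₀.1 + ε * Real.sin (t / ε) * v.1,
        η₀.2 + ε * Real.sin (t / ε) * v.2))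
        ![s / (r₀ * r₀ * r₀) * 1,
          s / (r₀ * r₀ * r₀) * η₀.1 + r₀⁻¹ * v.1,
          s / (r₀ * r₀ * r₀) * η₀.2 + r₀⁻¹ * v.2] 0 := by
      rw [hasDerivAt_pi]
      intro i
      fin_cases i
      · show HasDerivAt (fun t : ℝ => (Real.sqrt (1 - ((η₀.1 + ε * Real.sin (t / ε) * v.1) ^ 2
          + (η₀.2 + ε * Real.sin (t / ε) * v.2) ^ 2)))⁻¹ * 1) (s / (r₀ * r₀ * r₀) * 1) 0
        exact hrinvd.mul_const 1
      · show HasDerivAt (fun t : ℝ => (Real.sqrt (1 - ((η₀.1 + ε * Real.sin (t / ε) * v.1) ^ 2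
          + (η₀.2 + ε * Real.sin (t / ε) * v.2) ^ 2)))⁻¹ * (η₀.1 + ε * Real.sin (t / ε) * v.1))
          (s / (r₀ * r₀ * r₀) * η₀.1 + r₀⁻¹ * v.1) 0
        have h := hrinvd.mul had
        refine h.congr_deriv ?_
        rw [hc0]
        simp [zero_div]
      · show HasDerivAt (fun t : ℝ => (Real.sqrt (1 - ((η₀.1 + ε * Real.sin (t / ε) * v.1) ^ 2
          + (η₀.2 + ε * Real.sin (t / ε) * v.2) ^ 2)))⁻¹ * (η₀.2 + ε * Real.sin (t / ε) * v.2))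
          (s / (r₀ * r₀ * r₀) * η₀.2 + r₀⁻¹ * v.2) 0
        have h := hrinvd.mul hbd
        refine h.congr_deriv ?_
        rw [hc0]
        simp [zero_div]
    have hmem : ∀ t : ℝ, mink ((fun t : ℝ => invProj (η₀.1 + ε * Real.sin (t / ε) * v.1,
        η₀.2 + ε * Real.sin (t / ε) * v.2)) t) ((fun t : ℝ => invProj (η₀.1 + ε * Real.sin (t / ε) * v.1,
        η₀.2 + ε * Real.sin (t / ε) * v.2)) t) = -1 ∧
        0 < (fun t : ℝ => invProj (η₀.1 + ε * Real.sin (t / ε) * v.1,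
        η₀.2 + ε * Real.sin (t / ε) * v.2)) t 0 := by
      intro t
      constructor
      · exact mink_invProj_self _ (hdisk t)
      · show 0 < (Real.sqrt (1 - ((η₀.1 + ε * Real.sin (t / ε) * v.1) ^ 2
          + (η₀.2 + ε * Real.sin (t / ε) * v.2) ^ 2)))⁻¹ * 1
        have h1 : (0:ℝ) < 1 - ((η₀.1 + ε * Real.sin (t / ε) * v.1) ^ 2
          + (η₀.2 + ε * Real.sin (t / ε) * v.2) ^ 2) := by linarith [hdisk t]
        have h2 : 0 < Real.sqrt (1 - ((η₀.1 + ε * Real.sin (t / ε) * v.1) ^ 2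
          + (η₀.2 + ε * Real.sin (t / ε) * v.2) ^ 2)) := Real.sqrt_pos.mpr h1
        positivity
    have hpair0 : (η₀.1 + ε * Real.sin ((0:ℝ) / ε) * v.1, η₀.2 + ε * Real.sin ((0:ℝ) / ε) * v.2) = η₀ := by
      simp [zero_div]
    have hcstart : (fun t : ℝ => invProj (η₀.1 + ε * Real.sin (t / ε) * v.1,
        η₀.2 + ε * Real.sin (t / ε) * v.2)) 0 = p₀ := by
      show invProj (η₀.1 + ε * Real.sin ((0:ℝ) / ε) * v.1, η₀.2 + ε * Real.sin ((0:ℝ) / ε) * v.2) = p₀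
      rw [hpair0, hp₀]
    have hud := hG _ _ hmem hcstart hcd
    have hfun : (fun t : ℝ => u ((fun t : ℝ => invProj (η₀.1 + ε * Real.sin (t / ε) * v.1,
        η₀.2 + ε * Real.sin (t / ε) * v.2)) t)) =
        (fun t : ℝ => ub (η₀.1 + ε * Real.sin (t / ε) * v.1, η₀.2 + ε * Real.sin (t / ε) * v.2)
          / Real.sqrt (1 - ((η₀.1 + ε * Real.sin (t / ε) * v.1) ^ 2
            + (η₀.2 + ε * Real.sin (t / ε) * v.2) ^ 2))) := by
      funext t
      exact hub _ (hdisk t)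
    rw [hfun] at hud
    have hpaird : HasDerivAt (fun t : ℝ => (η₀.1 + ε * Real.sin (t / ε) * v.1,
        η₀.2 + ε * Real.sin (t / ε) * v.2)) (v.1, v.2) 0 := had.prodMk hbd
    have hDub' : HasFDerivAt ub Dub ((fun t : ℝ => (η₀.1 + ε * Real.sin (t / ε) * v.1,
        η₀.2 + ε * Real.sin (t / ε) * v.2)) 0) := by
      show HasFDerivAt ub Dub (η₀.1 + ε * Real.sin ((0:ℝ) / ε) * v.1, η₀.2 + ε * Real.sin ((0:ℝ) / ε) * v.2)
      rw [hpair0]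
      exact hDub
    have hubc : HasDerivAt (fun t : ℝ => ub (η₀.1 + ε * Real.sin (t / ε) * v.1,
        η₀.2 + ε * Real.sin (t / ε) * v.2)) (Dub (v.1, v.2)) 0 :=
      hDub'.comp_hasDerivAt 0 hpaird
    have hdivd := hubc.div hrd (by rw [hc0]; exact hr₀ne)
    have huniq := hud.unique hdivd
    rw [hpair0, hc0] at huniq
    have E : -(G 0 * (s / (r₀ * r₀ * r₀) * 1))
        + G 1 * (s / (r₀ * r₀ * r₀) * η₀.1 + r₀⁻¹ * v.1)
        + G 2 * (s / (r₀ * r₀ * r₀) * η₀.2 + r₀⁻¹ * v.2)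
        = (Dub (v.1, v.2) * r₀ - ub η₀ * (-(2 * s) / (2 * r₀))) / r₀ ^ 2 := huniq
    have E' : r₀⁻¹ * (v.1 * G 1 + v.2 * G 2)
        = (Dub (v.1, v.2) * r₀ - ub η₀ * (-(2 * s) / (2 * r₀))) / r₀ ^ 2 := by
      rw [← E]
      linear_combination (-(s / (r₀ * r₀ * r₀))) * hG0
    have hvv : Dub (v.1, v.2) = Dub v := rfl
    rw [hvv, hub0, hsdef] at E'
    field_simp at E'
    have E2 : Dub v * r₀ * (2 * r₀ ^ 2)
        = (r₀ * (v.1 * G 1 + v.2 * G 2) - u p₀ * (η₀.1 * v.1 + η₀.2 * v.2)) * (2 * r₀ ^ 2) := by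
      linear_combination (-(2 * r₀ ^ 2)) * E'
    have E3 := mul_right_cancel₀ (show (2:ℝ) * r₀ ^ 2 ≠ 0 by positivity) E2
    rw [hσi, hσi, hp1, hp2]
    field_simp
    linear_combination E3
  -- assemble
  intro η hη
  have hA : -(σ 0) + η₀.1 * σ 1 + η₀.2 * σ 2 = ub η₀ := by
    rw [hσi, hσi, hσi, hp0, hp1, hp2, hub0]
    field_simp
    linear_combination r₀ * hG0 - u p₀ * hr₀sq
  have hkey1 : Dub (η - η₀) = (η.1 - η₀.1) * σ 1 + (η.2 - η₀.2) * σ 2 := by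
    simpa using key (η - η₀)
  show ub η₀ + Dub (η - η₀) = -(1 * σ 0) + η.1 * σ 1 + η.2 * σ 2
  rw [hkey1, ← hA]
  ring
end

section
/- Let u : H^2 → R be a smooth function such that Δu - 2u = 0, let B = Hess(u) - u·Id with eigenvalues λ and -λ, and suppose sup|λ| =: t₀ < ∞. Then for every t ≥ t₀, the function on the Klein disk η ↦ ū(η) - t√(1-|η|²) is convex and η ↦ ū(η) + t√(1-|η|²) is concave, where ū(η) = √(1-|η|²) · u(Π^{-1}(η)) and Π : H^2 → D² is the radial projection. Consequently ū extends continuously to the closed disk. -/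
open Filter Topology

/-- The open Klein disk. -/
def kdisk : Set (ℝ × ℝ) := {p | p.1 ^ 2 + p.2 ^ 2 < 1}

/-- L(η) = √(1 - |η|²). -/
noncomputable def Lfun (p : ℝ × ℝ) : ℝ := Real.sqrt (1 - (p.1 ^ 2 + p.2 ^ 2))

/-- Euclidean Hessian of F as a bilinear map. -/
noncomputable def hessE (F : ℝ × ℝ → ℝ) (p X Y : ℝ × ℝ) : ℝ :=
  fderiv ℝ (fun q => fderiv ℝ F q X) p Y

/-- The Klein metric on the disk: g(η)(X,X) = |X|²/(1-|η|²) + ⟨η,X⟩²/(1-|η|²)². -/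
noncomputable def gK (p X : ℝ × ℝ) : ℝ :=
  (X.1 ^ 2 + X.2 ^ 2) / (1 - (p.1 ^ 2 + p.2 ^ 2))
    + (p.1 * X.1 + p.2 * X.2) ^ 2 / (1 - (p.1 ^ 2 + p.2 ^ 2)) ^ 2

lemma isOpen_kdisk : IsOpen kdisk := by
  have : Continuous fun p : ℝ × ℝ => p.1 ^ 2 + p.2 ^ 2 := by fun_prop
  exact isOpen_lt this continuous_const

lemma convex_kdisk : Convex ℝ kdisk := by
  intro x hx y hy a b ha hb hab
  simp only [kdisk, Set.mem_setOf_eq] at *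
  have h1 : (a • x + b • y).1 = a * x.1 + b * y.1 := rfl
  have h2 : (a • x + b • y).2 = a * x.2 + b * y.2 := rfl
  rw [h1, h2]
  rcases eq_or_lt_of_le ha with rfl | ha'
  · have hb1 : b = 1 := by linarith
    subst hb1; simpa using hy
  · nlinarith [mul_nonneg (mul_nonneg ha hb) (sq_nonneg (x.1 - y.1)),
      mul_nonneg (mul_nonneg ha hb) (sq_nonneg (x.2 - y.2)),
      mul_lt_mul_of_pos_left hx ha', mul_le_mul_of_nonneg_left hy.le hb]

lemma continuous_Lfun : Continuous Lfun := by
  unfold Lfun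
  fun_prop

lemma Lfun_pos {p : ℝ × ℝ} (hp : p ∈ kdisk) : 0 < Lfun p :=
  Real.sqrt_pos.2 (by simpa [kdisk] using hp)

lemma Lfun_zero : Lfun (0 : ℝ × ℝ) = 1 := by
  simp [Lfun]

lemma gK_nonneg {p : ℝ × ℝ} (hp : p ∈ kdisk) (X : ℝ × ℝ) : 0 ≤ gK p X := by
  have h : (0:ℝ) < 1 - (p.1 ^ 2 + p.2 ^ 2) := by simpa [kdisk, sub_pos] using hp
  unfold gK
  positivity

lemma zero_mem_kdisk : (0 : ℝ × ℝ) ∈ kdisk := by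
  simp [kdisk]

lemma hessE_neg (F : ℝ × ℝ → ℝ) (p X Y : ℝ × ℝ) :
    hessE (fun q => -F q) p X Y = -hessE F p X Y := by
  unfold hessE
  have h1 : (fun q => fderiv ℝ (fun z => -F z) q X) = fun q => -(fderiv ℝ F q X) := by
    funext q
    rw [fderiv_fun_neg]
    simp
  rw [h1, fderiv_fun_neg]
  simp

lemma alg_helper (a qp r : ℝ) (hr : 0 < r) :
    r * (a / r ^ 2 + (qp / 2) ^ 2 / (r ^ 2) ^ 2)
      = -(((-2 * a) * (2 * r) - qp * (2 * (qp / (2 * r)))) / (2 * r) ^ 2) := by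
  field_simp
  ring

lemma key_convex (ub : ℝ × ℝ → ℝ) (hsm : ContDiffOn ℝ (⊤ : ℕ∞) ub kdisk) (t₀ t : ℝ)
    (hB : ∀ p ∈ kdisk, ∀ X : ℝ × ℝ, |hessE ub p X X / Lfun p| ≤ t₀ * gK p X)
    (ht : t₀ ≤ t) :
    ConvexOn ℝ kdisk (fun p => ub p - t * Lfun p) := by
  refine ⟨convex_kdisk, ?_⟩
  intro x hx y hy a b ha hb hab
  set v : ℝ × ℝ := y - x with hv
  set γ : ℝ → ℝ × ℝ := fun s => x + s • v with hγdef
  have hγab : ∀ s, γ s = (1 - s) • x + s • y := by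
    intro s; simp only [hγdef, hv]; module
  have hγmem : ∀ s ∈ Set.Icc (0:ℝ) 1, γ s ∈ kdisk := by
    intro s hs
    rw [hγab]
    exact convex_kdisk hx hy (by linarith [hs.2]) hs.1 (by ring)
  set Q : ℝ → ℝ := fun s => 1 - ((x.1 + s * v.1) ^ 2 + (x.2 + s * v.2) ^ 2) with hQ
  set Q' : ℝ → ℝ := fun s => -2 * ((x.1 + s * v.1) * v.1 + (x.2 + s * v.2) * v.2) with hQ'
  have hγ1 : ∀ s, (γ s).1 = x.1 + s * v.1 := fun s => rfl
  have hγ2 : ∀ s, (γ s).2 = x.2 + s * v.2 := fun s => rfl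
  have hLQ : ∀ s, Lfun (γ s) = Real.sqrt (Q s) := fun s => rfl
  have hQγ : ∀ s, Q s = 1 - ((γ s).1 ^ 2 + (γ s).2 ^ 2) := fun s => rfl
  have hQpos : ∀ s ∈ Set.Icc (0:ℝ) 1, 0 < Q s := by
    intro s hs
    have h := hγmem s hs
    simp only [kdisk, Set.mem_setOf_eq] at h
    rw [hQγ]; linarith
  -- first derivatives
  have hγd : ∀ s : ℝ, HasDerivAt γ v s := by
    intro s
    simpa [hγdef] using ((hasDerivAt_id s).smul_const v).const_add x
  have hlin1 : ∀ s : ℝ, HasDerivAt (fun s : ℝ => x.1 + s * v.1) v.1 s := by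
    intro s; simpa using (hasDerivAt_mul_const v.1).const_add x.1
  have hlin2 : ∀ s : ℝ, HasDerivAt (fun s : ℝ => x.2 + s * v.2) v.2 s := by
    intro s; simpa using (hasDerivAt_mul_const v.2).const_add x.2
  have hQd : ∀ s : ℝ, HasDerivAt Q (Q' s) s := by
    intro s
    have h := (((hlin1 s).pow 2).add ((hlin2 s).pow 2)).const_sub 1
    refine h.congr_deriv ?_
    rw [hQ']; norm_num; ring
  have hQ'd : ∀ s : ℝ, HasDerivAt Q' (-2 * (v.1 ^ 2 + v.2 ^ 2)) s := by
    intro s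
    have h := (((hlin1 s).mul_const v.1).add ((hlin2 s).mul_const v.2)).const_mul (-2)
    refine h.congr_deriv ?_
    ring
  set S : ℝ → ℝ := fun s => Q' s / (2 * Real.sqrt (Q s)) with hS
  set R : ℝ → ℝ := fun s =>
    ((-2 * (v.1 ^ 2 + v.2 ^ 2)) * (2 * Real.sqrt (Q s)) - Q' s * (2 * S s))
      / (2 * Real.sqrt (Q s)) ^ 2 with hR
  have hsq : ∀ s ∈ Set.Icc (0:ℝ) 1, HasDerivAt (fun s => Real.sqrt (Q s)) (S s) s :=
    fun s hs => (hQd s).sqrt (ne_of_gt (hQpos s hs))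
  have hsq2 : ∀ s ∈ Set.Icc (0:ℝ) 1, HasDerivAt S (R s) s := by
    intro s hs
    have hden : 2 * Real.sqrt (Q s) ≠ 0 := by
      have := Real.sqrt_pos.2 (hQpos s hs); positivity
    exact (hQ'd s).div ((hsq s hs).const_mul 2) hden
  -- ub derivatives
  have hubd : ∀ s ∈ Set.Icc (0:ℝ) 1,
      HasDerivAt (fun s => ub (γ s)) (fderiv ℝ ub (γ s) v) s := by
    intro s hs
    have hca : ContDiffAt ℝ (⊤ : ℕ∞) ub (γ s) :=
      hsm.contDiffAt (isOpen_kdisk.mem_nhds (hγmem s hs))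
    exact ((hca.differentiableAt (by simp)).hasFDerivAt).comp_hasDerivAt s (hγd s)
  have hubd2 : ∀ s ∈ Set.Icc (0:ℝ) 1,
      HasDerivAt (fun s => fderiv ℝ ub (γ s) v) (hessE ub (γ s) v v) s := by
    intro s hs
    have hca : ContDiffAt ℝ (⊤ : ℕ∞) ub (γ s) :=
      hsm.contDiffAt (isOpen_kdisk.mem_nhds (hγmem s hs))
    have hfd : DifferentiableAt ℝ (fderiv ℝ ub) (γ s) :=
      (hca.fderiv_right (m := 1) (WithTop.coe_le_coe.2 le_top)).differentiableAt one_ne_zero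
    have hw : DifferentiableAt ℝ (fun q => fderiv ℝ ub q v) (γ s) :=
      (ContinuousLinearMap.apply ℝ ℝ v).differentiableAt.comp (γ s) hfd
    exact (hw.hasFDerivAt).comp_hasDerivAt s (hγd s)
  -- assemble g
  set g : ℝ → ℝ := fun s => ub (γ s) - t * Real.sqrt (Q s) with hg
  set g1 : ℝ → ℝ := fun s => fderiv ℝ ub (γ s) v - t * S s with hg1
  set g2 : ℝ → ℝ := fun s => hessE ub (γ s) v v - t * R s with hg2
  have hgd : ∀ s ∈ Set.Icc (0:ℝ) 1, HasDerivAt g (g1 s) s :=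
    fun s hs => (hubd s hs).sub ((hsq s hs).const_mul t)
  have hgd2 : ∀ s ∈ Set.Icc (0:ℝ) 1, HasDerivAt g1 (g2 s) s :=
    fun s hs => (hubd2 s hs).sub ((hsq2 s hs).const_mul t)
  have hIcc : interior (Set.Icc (0:ℝ) 1) ⊆ Set.Icc (0:ℝ) 1 := interior_subset
  -- nonnegativity of second derivative
  have hnn : ∀ s ∈ interior (Set.Icc (0:ℝ) 1), 0 ≤ g2 s := by
    intro s hs
    have hsI := hIcc hs
    have hmem := hγmem s hsI
    have hQp := hQpos s hsI
    set r := Real.sqrt (Q s) with hrdef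
    have hrpos : 0 < r := Real.sqrt_pos.2 hQp
    have hQr : Q s = r ^ 2 := (Real.sq_sqrt hQp.le).symm
    have hip : ((γ s).1 * v.1 + (γ s).2 * v.2) ^ 2 = (Q' s / 2) ^ 2 := by
      rw [hγ1, hγ2, hQ']; ring
    have hgkr : Lfun (γ s) * gK (γ s) v = -R s := by
      have e1 : gK (γ s) v
          = (v.1 ^ 2 + v.2 ^ 2) / Q s + (Q' s / 2) ^ 2 / (Q s) ^ 2 := by
        rw [gK, ← hQγ, hip]
      have e2 : R s = ((-2 * (v.1 ^ 2 + v.2 ^ 2)) * (2 * r)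
          - Q' s * (2 * (Q' s / (2 * r)))) / (2 * r) ^ 2 := rfl
      have e3 : Lfun (γ s) = r := hLQ s
      rw [e3, e1, e2, hQr]
      linear_combination alg_helper (v.1 ^ 2 + v.2 ^ 2) (Q' s) r hrpos
    have hBs := hB (γ s) hmem v
    have hL := Lfun_pos hmem
    have hG := gK_nonneg hmem v
    have h1 : -(t₀ * gK (γ s) v) ≤ hessE ub (γ s) v v / Lfun (γ s) := (abs_le.1 hBs).1
    have h2 : -(t₀ * gK (γ s) v) * Lfun (γ s) ≤ hessE ub (γ s) v v := by
      have := mul_le_mul_of_nonneg_right h1 hL.le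
      rwa [div_mul_cancel₀ _ (ne_of_gt hL)] at this
    have h3 : t * (Lfun (γ s) * gK (γ s) v) = -(t * R s) := by rw [hgkr]; ring
    have h4 : 0 ≤ (t - t₀) * (Lfun (γ s) * gK (γ s) v) :=
      mul_nonneg (by linarith) (mul_nonneg hL.le hG)
    show 0 ≤ hessE ub (γ s) v v - t * R s
    nlinarith [h2, h3, h4]
  -- convexity on Icc
  have hgc : ConvexOn ℝ (Set.Icc (0:ℝ) 1) g := by
    refine convexOn_of_hasDerivWithinAt2_nonneg (convex_Icc 0 1)
      (fun s hs => (hgd s hs).continuousAt.continuousWithinAt)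
      (fun s hs => ((hgd s (hIcc hs)).hasDerivWithinAt))
      (fun s hs => ((hgd2 s (hIcc hs)).hasDerivWithinAt)) hnn
  -- conclude
  have h01 : (0:ℝ) ∈ Set.Icc (0:ℝ) 1 := Set.left_mem_Icc.2 zero_le_one
  have h11 : (1:ℝ) ∈ Set.Icc (0:ℝ) 1 := Set.right_mem_Icc.2 zero_le_one
  have hfin := hgc.2 h01 h11 ha hb hab
  simp only [smul_eq_mul, mul_zero, mul_one, zero_add] at hfin
  have hγ0 : γ 0 = x := by simp [hγdef]
  have hγone : γ 1 = y := by simp [hγdef, hv]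
  have hpt : a • x + b • y = γ b := by
    rw [hγab, show (1:ℝ) - b = a by linarith]
  simp only [smul_eq_mul]
  rw [hpt]
  have e0 : ub x - t * Lfun x = g 0 := by
    have h : g 0 = ub (γ 0) - t * Real.sqrt (Q 0) := rfl
    rw [h, ← hLQ 0, hγ0]
  have e1 : ub y - t * Lfun y = g 1 := by
    have h : g 1 = ub (γ 1) - t * Real.sqrt (Q 1) := rfl
    rw [h, ← hLQ 1, hγone]
  have eb : ub (γ b) - t * Lfun (γ b) = g b := by
    have h : g b = ub (γ b) - t * Real.sqrt (Q b) := rfl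
    rw [h, ← hLQ b]
  rw [eb, e0, e1]
  exact hfin

lemma smul_mem_kdisk {y : ℝ × ℝ} (hy : y.1 ^ 2 + y.2 ^ 2 ≤ 1) {σ : ℝ}
    (h0 : 0 ≤ σ) (h1 : σ < 1) : σ • y ∈ kdisk := by
  have e1 : (σ • y).1 = σ * y.1 := rfl
  have e2 : (σ • y).2 = σ * y.2 := rfl
  simp only [kdisk, Set.mem_setOf_eq, e1, e2]
  have hs2 : σ ^ 2 < 1 := by nlinarith
  nlinarith [mul_le_mul_of_nonneg_left hy (sq_nonneg σ)]

lemma Lfun_smul {y : ℝ × ℝ} (σ : ℝ) :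
    Lfun (σ • y) = Real.sqrt (1 - σ ^ 2 * (y.1 ^ 2 + y.2 ^ 2)) := by
  have e1 : (σ • y).1 = σ * y.1 := rfl
  have e2 : (σ • y).2 = σ * y.2 := rfl
  rw [Lfun, e1, e2]
  congr 1
  ring

lemma Lfun_smul_ge {y : ℝ × ℝ} (hy : y.1 ^ 2 + y.2 ^ 2 ≤ 1) {σ : ℝ}
    (h0 : 0 ≤ σ) (h1 : σ ≤ 1) : 1 - σ ≤ Lfun (σ • y) := by
  rw [Lfun_smul]
  have h2 : (1 - σ) ^ 2 ≤ 1 - σ ^ 2 * (y.1 ^ 2 + y.2 ^ 2) := by nlinarith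
  calc 1 - σ = Real.sqrt ((1 - σ) ^ 2) := by
        rw [Real.sqrt_sq (by linarith)]
    _ ≤ _ := Real.sqrt_le_sqrt h2

/-- slope monotonicity for convex functions along rays from the origin -/
lemma slope_convex {F : ℝ × ℝ → ℝ} (hF : ConvexOn ℝ kdisk F) {y : ℝ × ℝ}
    {r σ : ℝ} (hr : 0 < r) (hrσ : r ≤ σ) (hmem : σ • y ∈ kdisk) :
    (F (r • y) - F 0) / r ≤ (F (σ • y) - F 0) / σ := by
  have hσ : 0 < σ := lt_of_lt_of_le hr hrσ
  have hw1 : (0:ℝ) ≤ 1 - r / σ := by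
    rw [sub_nonneg]
    exact div_le_one_of_le₀ hrσ hσ.le
  have hw2 : (0:ℝ) ≤ r / σ := by positivity
  have hpt : (1 - r / σ) • (0 : ℝ × ℝ) + (r / σ) • (σ • y) = r • y := by
    rw [smul_smul, div_mul_cancel₀ _ (ne_of_gt hσ)]
    simp
  have h1 := hF.2 zero_mem_kdisk hmem hw1 hw2 (by ring)
  rw [hpt] at h1
  simp only [smul_eq_mul] at h1
  rw [div_le_div_iff₀ hr hσ]
  have h2 : (1 - r / σ) * F 0 * σ + r / σ * F (σ • y) * σ
      = (σ - r) * F 0 + r * F (σ • y) := by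
    field_simp
  nlinarith [mul_le_mul_of_nonneg_right h1 hσ.le]

lemma slope_concave {F : ℝ × ℝ → ℝ} (hF : ConcaveOn ℝ kdisk F) {y : ℝ × ℝ}
    {r σ : ℝ} (hr : 0 < r) (hrσ : r ≤ σ) (hmem : σ • y ∈ kdisk) :
    (F (σ • y) - F 0) / σ ≤ (F (r • y) - F 0) / r := by
  have hσ : 0 < σ := lt_of_lt_of_le hr hrσ
  have h := slope_convex hF.neg hr hrσ hmem
  simp only [Pi.neg_apply] at h
  have e1 : (-F (r • y) - -F 0) / r = -((F (r • y) - F 0) / r) := by ring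
  have e2 : (-F (σ • y) - -F 0) / σ = -((F (σ • y) - F 0) / σ) := by ring
  rw [e1, e2] at h
  linarith

lemma extend_boundary (ub : ℝ × ℝ → ℝ) (hc : ContinuousOn ub kdisk)
    (t₀ : ℝ) (ht₀ : 0 ≤ t₀)
    (hf : ConvexOn ℝ kdisk (fun p => ub p - t₀ * Lfun p))
    (hh : ConcaveOn ℝ kdisk (fun p => ub p + t₀ * Lfun p)) :
    ∃ G : ℝ × ℝ → ℝ, ContinuousOn G {p : ℝ × ℝ | p.1 ^ 2 + p.2 ^ 2 ≤ 1} ∧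
      ∀ p ∈ kdisk, G p = ub p := by
  classical
  set K : Set (ℝ × ℝ) := {p : ℝ × ℝ | p.1 ^ 2 + p.2 ^ 2 ≤ 1} with hK
  set f : ℝ × ℝ → ℝ := fun p => ub p - t₀ * Lfun p with hfdef
  set h : ℝ × ℝ → ℝ := fun p => ub p + t₀ * Lfun p with hhdef
  have hfh : ∀ p, h p = f p + 2 * t₀ * Lfun p := by intro p; rw [hfdef, hhdef]; ring
  -- the sequence s n → 1
  set s : ℕ → ℝ := fun n => ((n : ℝ) + 1) / ((n : ℝ) + 2) with hsdef
  have hs0 : ∀ n, 0 < s n := by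
    intro n; apply div_pos <;> positivity
  have hs1 : ∀ n, s n < 1 := by
    intro n
    rw [hsdef, div_lt_one (by positivity)]
    linarith
  have hslim : Tendsto s atTop (𝓝 1) := by
    have h2 : Tendsto (fun n : ℕ => ((n : ℝ) + 2)) atTop atTop :=
      tendsto_atTop_add_const_right _ 2 tendsto_natCast_atTop_atTop
    have h3 : Tendsto (fun n : ℕ => ((n : ℝ) + 2)⁻¹) atTop (𝓝 0) :=
      h2.inv_tendsto_atTop
    have h4 : s = fun n : ℕ => 1 - ((n : ℝ) + 2)⁻¹ := by
      funext n
      rw [hsdef]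
      field_simp
      ring
    rw [h4]
    simpa using (tendsto_const_nhds.sub h3)
  -- continuity of f and h on the open disk
  have hLcont : Continuous fun p : ℝ × ℝ => t₀ * Lfun p :=
    continuous_const.mul continuous_Lfun
  have hfcont : ContinuousOn f kdisk := hc.sub hLcont.continuousOn
  have hhcont : ContinuousOn h kdisk := hc.add hLcont.continuousOn
  -- slope functions
  set e : ℕ → (ℝ × ℝ) → ℝ := fun n y => f 0 + (f (s n • y) - f 0) / s n with hedef
  set d : ℕ → (ℝ × ℝ) → ℝ := fun n y => h 0 + (h (s n • y) - h 0) / s n with hddef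
  have hsmem : ∀ {y : ℝ × ℝ}, y ∈ K → ∀ n, s n • y ∈ kdisk := by
    intro y hy n
    exact smul_mem_kdisk hy (hs0 n).le (hs1 n)
  have hsmono : Monotone s := by
    intro n m hnm
    have hc : (n : ℝ) ≤ (m : ℝ) := Nat.cast_le.2 hnm
    rw [hsdef, div_le_div_iff₀ (by positivity) (by positivity)]
    nlinarith
  -- monotonicity of e, antitonicity of d
  have he_mono : ∀ {y : ℝ × ℝ}, y ∈ K → ∀ {n m : ℕ}, n ≤ m → e n y ≤ e m y := by
    intro y hy n m hnm
    have := slope_convex hf (hs0 n) (hsmono hnm) (hsmem hy m)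
    rw [hedef]
    simp only
    linarith
  have hd_anti : ∀ {y : ℝ × ℝ}, y ∈ K → ∀ {n m : ℕ}, n ≤ m → d m y ≤ d n y := by
    intro y hy n m hnm
    have := slope_concave hh (hs0 n) (hsmono hnm) (hsmem hy m)
    rw [hddef]
    simp only
    linarith
  -- gap identity and nonnegativity
  have hgap_eq : ∀ {y : ℝ × ℝ}, ∀ n, d n y - e n y
      = 2 * t₀ * ((s n - 1 + Lfun (s n • y)) / s n) := by
    intro y n
    rw [hedef, hddef]
    simp only
    rw [hfh, hfh, Lfun_zero]
    field_simp [(hs0 n).ne']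
    ring
  have hgap_nonneg : ∀ {y : ℝ × ℝ}, y ∈ K → ∀ n, e n y ≤ d n y := by
    intro y hy n
    have h1 : 1 - s n ≤ Lfun (s n • y) := Lfun_smul_ge hy (hs0 n).le (hs1 n).le
    have h2 : 0 ≤ 2 * t₀ * ((s n - 1 + Lfun (s n • y)) / s n) := by
      apply mul_nonneg (by linarith)
      apply div_nonneg (by linarith) (hs0 n).le
    rw [← hgap_eq (y := y) n] at h2
    linarith
  have he_le_d : ∀ {y : ℝ × ℝ}, y ∈ K → ∀ n m, e n y ≤ d m y := by
    intro y hy n m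
    rcases le_total n m with hnm | hmn
    · exact le_trans (he_mono hy hnm) (hgap_nonneg hy m)
    · exact le_trans (hgap_nonneg hy n) (hd_anti hy hmn)
  have hbdd : ∀ {y : ℝ × ℝ}, y ∈ K → BddAbove (Set.range fun n => e n y) := by
    intro y hy
    refine ⟨d 0 y, ?_⟩
    rintro _ ⟨n, rfl⟩
    exact he_le_d hy n 0
  -- the extension
  set G : (ℝ × ℝ) → ℝ := fun y => t₀ * Lfun y + ⨆ n, e n y with hGdef
  -- continuity of e n and d n at points of K
  have hecont : ∀ (n : ℕ) (b : ℝ × ℝ), b ∈ K → ContinuousAt (fun y => e n y) b := by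
    intro n b hb
    have h1 : ContinuousAt f (s n • b) :=
      hfcont.continuousAt (isOpen_kdisk.mem_nhds (hsmem hb n))
    have h2 : ContinuousAt (fun y : ℝ × ℝ => s n • y) b :=
      (continuous_const_smul (s n)).continuousAt
    exact continuousAt_const.add (((h1.comp h2).sub continuousAt_const).div_const _)
  have hdcont : ∀ (n : ℕ) (b : ℝ × ℝ), b ∈ K → ContinuousAt (fun y => d n y) b := by
    intro n b hb
    have h1 : ContinuousAt h (s n • b) :=
      hhcont.continuousAt (isOpen_kdisk.mem_nhds (hsmem hb n))
    have h2 : ContinuousAt (fun y : ℝ × ℝ => s n • y) b :=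
      (continuous_const_smul (s n)).continuousAt
    exact continuousAt_const.add (((h1.comp h2).sub continuousAt_const).div_const _)
  -- on the open disk, G = ub
  have hkdisk_sub : kdisk ⊆ K := by
    intro p hp
    exact le_of_lt (show p.1 ^ 2 + p.2 ^ 2 < 1 from hp)
  have hGeq : ∀ y ∈ kdisk, G y = ub y := by
    intro y hy
    have hyK : y ∈ K := hkdisk_sub hy
    have hsup : (⨆ n, e n y) = f y := by
      have hle : ∀ n, e n y ≤ f y := by
        intro n
        have hmem1 : (1 : ℝ) • y ∈ kdisk := by rwa [one_smul]
        have := slope_convex hf (hs0 n) (hs1 n).le hmem1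
        rw [one_smul, div_one] at this
        rw [hedef]; simp only
        linarith
      have htend : Tendsto (fun n => e n y) atTop (𝓝 (f y)) := by
        have h1 : Tendsto (fun n => s n • y) atTop (𝓝 y) := by
          have := hslim.smul_const y
          rwa [one_smul] at this
        have h2 : ContinuousAt f y := hfcont.continuousAt (isOpen_kdisk.mem_nhds hy)
        have h3 : Tendsto (fun n => f (s n • y)) atTop (𝓝 (f y)) := h2.tendsto.comp h1
        have h4 : Tendsto (fun n => f 0 + (f (s n • y) - f 0) / s n) atTop
            (𝓝 (f 0 + (f y - f 0) / 1)) :=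
          tendsto_const_nhds.add ((h3.sub tendsto_const_nhds).div hslim one_ne_zero)
        have h5 : f 0 + (f y - f 0) / 1 = f y := by ring
        rw [h5] at h4
        exact h4
      refine le_antisymm (ciSup_le hle) ?_
      exact le_of_tendsto htend (Filter.Eventually.of_forall fun n => le_ciSup (hbdd hyK) n)
    rw [hGdef]
    simp only
    rw [hsup, hfdef]
    ring
  refine ⟨G, ?_, hGeq⟩
  intro b hbK
  by_cases hbi : b ∈ kdisk
  · -- interior point
    have hub : ContinuousAt ub b := hc.continuousAt (isOpen_kdisk.mem_nhds hbi)
    have hev : ∀ᶠ y in 𝓝 b, ub y = G y :=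
      Filter.eventually_of_mem (isOpen_kdisk.mem_nhds hbi) fun y hy => (hGeq y hy).symm
    exact (hub.congr hev).continuousWithinAt
  · -- boundary point
    have hb1 : b.1 ^ 2 + b.2 ^ 2 = 1 := le_antisymm hbK (not_lt.1 hbi)
    have hLb : Lfun b = 0 := by rw [Lfun, hb1]; simp
    have hGb : G b = ⨆ n, e n b := by rw [hGdef]; simp only; rw [hLb]; ring
    show Tendsto G (𝓝[K] b) (𝓝 (G b))
    rw [tendsto_order]
    constructor
    · -- lower bound
      intro c hc'
      have hc2 : c < ⨆ n, e n b := by rwa [hGb] at hc'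
      obtain ⟨N, hN⟩ := exists_lt_of_lt_ciSup hc2
      have hev : ∀ᶠ y in 𝓝 b, c < e N y :=
        (hecont N b hbK).tendsto.eventually (eventually_gt_nhds hN)
      filter_upwards [nhdsWithin_le_nhds hev, self_mem_nhdsWithin] with y hy1 hy2
      have h1 : e N y ≤ ⨆ n, e n y := le_ciSup (hbdd hy2) N
      have h2 : 0 ≤ t₀ * Lfun y := mul_nonneg ht₀ (Real.sqrt_nonneg _)
      rw [hGdef]
      simp only
      linarith
    · -- upper bound
      intro c hc'
      -- the gap at b tends to 0
      have hgap0 : Tendsto (fun n => d n b - e n b) atTop (𝓝 0) := by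
        have h1 : Tendsto (fun n => s n • b) atTop (𝓝 b) := by
          have := hslim.smul_const b
          rwa [one_smul] at this
        have h2 : Tendsto (fun n => Lfun (s n • b)) atTop (𝓝 0) := by
          have := continuous_Lfun.continuousAt.tendsto.comp h1
          rwa [hLb] at this
        have h3 : Tendsto (fun n => 2 * t₀ * ((s n - 1 + Lfun (s n • b)) / s n)) atTop
            (𝓝 (2 * t₀ * ((1 - 1 + 0) / 1))) :=
          tendsto_const_nhds.mul
            ((((hslim.sub tendsto_const_nhds).add h2).div hslim one_ne_zero))
        have h4 : 2 * t₀ * ((1 - 1 + (0:ℝ)) / 1) = 0 := by ring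
        rw [h4] at h3
        refine h3.congr fun n => (hgap_eq n).symm
      obtain ⟨N, hN⟩ := (hgap0.eventually (gt_mem_nhds (show (0:ℝ) < c - G b by linarith))).exists
      have heNb : e N b ≤ G b := by
        rw [hGb]
        exact le_ciSup (hbdd hbK) N
      -- φ = t₀ L + d N is continuous, φ b < c
      have hφcont : ContinuousAt (fun y => t₀ * Lfun y + d N y) b :=
        (hLcont.continuousAt).add (hdcont N b hbK)
      have hφb : t₀ * Lfun b + d N b < c := by
        rw [hLb]
        have : d N b < e N b + (c - G b) := by linarith
        linarith
      have hev : ∀ᶠ y in 𝓝 b, t₀ * Lfun y + d N y < c :=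
        hφcont.tendsto.eventually (eventually_lt_nhds hφb)
      filter_upwards [nhdsWithin_le_nhds hev, self_mem_nhdsWithin] with y hy1 hy2
      have h1 : (⨆ n, e n y) ≤ d N y := ciSup_le fun n => he_le_d hy2 n N
      rw [hGdef]
      simp only
      linarith

/-- Let u : H² → ℝ be smooth with Δu - 2u = 0 (equivalently, in the Klein model, ū
satisfies Δ_Euc ū - Hess_Euc ū(η,η) = 0, where ū(η) = √(1-|η|²)·u(Π⁻¹η)), let
B = Hess(u) - u·Id with eigenvalues ±λ, and suppose sup|λ| =: t₀ < ∞.  By the identity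
L⁻¹ Hess_Euc ū = Hess^{D²}(L⁻¹ū) - (L⁻¹ū) g_{D²}, the shape operator B corresponds to the
bilinear form L⁻¹ Hess_Euc ū relative to the Klein metric g_{D²}; the eigenvalue bound is
|L⁻¹ Hess_Euc ū(X,X)| ≤ t₀ g_{D²}(X,X).  Then for every t ≥ t₀ the function
ū - t√(1-|η|²) is convex and ū + t√(1-|η|²) is concave on the disk; consequently ū
extends continuously to the closed disk. -/
theorem stmt19 (ub : ℝ × ℝ → ℝ) (hsm : ContDiffOn ℝ (⊤ : ℕ∞) ub kdisk)
    -- the mean-surface equation Δ_Euc ū - Hess_Euc ū(η,η) = 0 (equivalent to Δu - 2u = 0)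
    (hPDE : ∀ p ∈ kdisk,
      hessE ub p ((1 : ℝ), (0 : ℝ)) ((1 : ℝ), (0 : ℝ))
        + hessE ub p ((0 : ℝ), (1 : ℝ)) ((0 : ℝ), (1 : ℝ)) = hessE ub p p p)
    -- the principal curvatures ±λ of gr(u) are bounded: sup|λ| ≤ t₀, expressed via the
    -- identity B = L⁻¹ Hess_Euc ū (as bilinear forms relative to the Klein metric)
    (t₀ : ℝ)
    (hB : ∀ p ∈ kdisk, ∀ X : ℝ × ℝ, |hessE ub p X X / Lfun p| ≤ t₀ * gK p X) :
    (∀ t ≥ t₀,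
      ConvexOn ℝ kdisk (fun p => ub p - t * Lfun p) ∧
      ConcaveOn ℝ kdisk (fun p => ub p + t * Lfun p)) ∧
    (∃ G : ℝ × ℝ → ℝ, ContinuousOn G {p : ℝ × ℝ | p.1 ^ 2 + p.2 ^ 2 ≤ 1} ∧
      ∀ p ∈ kdisk, G p = ub p) := by
  have ht₀0 : 0 ≤ t₀ := by
    have h0 := hB 0 zero_mem_kdisk (1, 0)
    have hL : Lfun (0 : ℝ × ℝ) = 1 := Lfun_zero
    have hg : gK (0 : ℝ × ℝ) (1, 0) = 1 := by norm_num [gK]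
    rw [hL, hg, div_one, mul_one] at h0
    exact le_trans (abs_nonneg _) h0
  have hpartA : ∀ t ≥ t₀, ConvexOn ℝ kdisk (fun p => ub p - t * Lfun p) ∧
      ConcaveOn ℝ kdisk (fun p => ub p + t * Lfun p) := by
    intro t ht
    constructor
    · exact key_convex ub hsm t₀ t hB ht
    · have hBneg : ∀ p ∈ kdisk, ∀ X : ℝ × ℝ,
          |hessE (fun q => -ub q) p X X / Lfun p| ≤ t₀ * gK p X := by
        intro p hp X
        rw [hessE_neg, neg_div, abs_neg]
        exact hB p hp X
      have hcv := key_convex (fun q => -ub q) hsm.neg t₀ t hBneg ht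
      have heq : (fun p => ub p + t * Lfun p)
          = -(fun p : ℝ × ℝ => -ub p - t * Lfun p) := by
        funext p
        simp
        ring
      rw [heq]
      exact hcv.neg
  refine ⟨hpartA, ?_⟩
  obtain ⟨hcv, hcc⟩ := hpartA t₀ le_rfl
  exact extend_boundary ub hsm.continuousOn t₀ ht₀0 hcv hcc
end
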